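/- There exists a function g : ℕ × ℚ → ℕ, namely g(m, δ) = (m−1)·e + m(m−1)/2 where e is the least integer with 2^{−e} < δ, such that: if n = g(m, δ), n ≥ m ≥ 1 ≥ δ > 0, and X is a finite set of naturals with |X| ≥ n, then there exists Y ⊆ X with |Y| = m, min Y = min X, such that for every X-quasistrong binary tree T and every A ⊆ T ∩ 2^{max X} with |A| ≥ δ·|T ∩ 2^{max X}|, there is a Y-quasistrong tree S ⊆ T all of whose leaves have an extension in A. -/

import Mathlib

open Finset

/-- Minimum of a finite set of naturals (0 for the empty set). -/
def fmin (X : Finset ℕ) : ℕ := X.min.untopD 0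

/-- Maximum of a finite set of naturals (0 for the empty set). -/
def fmax (X : Finset ℕ) : ℕ := X.max.unbotD 0

/-- `OmegaLarge d X` : `X` is ω^d-large (for `d ≥ 1`; `OmegaLarge 0` means nonempty).
`X` is ω^{d+1}-large iff `X = {min X} ∪ ⋃_{m < min X} X_m` where the `X_m` form a
stack (each max below the next min) of ω^d-large sets all above `min X`. -/
def OmegaLarge : ℕ → Finset ℕ → Prop
  | 0, X => X.Nonempty
  | d+1, X => X.Nonempty ∧ ∃ f : ℕ → Finset ℕ,
      (∀ m < fmin X, OmegaLarge d (f m)) ∧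
      (∀ m, m + 1 < fmin X → fmax (f m) < fmin (f (m+1))) ∧
      (∀ m < fmin X, fmin X < fmin (f m)) ∧
      X = insert (fmin X) ((Finset.range (fmin X)).biUnion f)

/-- `OmegaMulLarge d n X` : `X` is ω^d·n-large, i.e. a union of a stack of `n`
ω^d-large sets. -/
def OmegaMulLarge (d n : ℕ) (X : Finset ℕ) : Prop :=
  ∃ f : ℕ → Finset ℕ,
    (∀ m < n, OmegaLarge d (f m)) ∧
    (∀ m, m + 1 < n → fmax (f m) < fmin (f (m+1))) ∧
    X = (Finset.range n).biUnion f

/-- A (finite) binary tree: a set of binary strings closed under initial segments. -/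
def IsTree (T : Finset (List Bool)) : Prop :=
  ∀ σ ∈ T, ∀ τ : List Bool, τ <+: σ → τ ∈ T

/-- `level T x` is `T ∩ 2^x`, the set of strings in `T` of length `x`. -/
def level (T : Finset (List Bool)) (x : ℕ) : Finset (List Bool) :=
  T.filter (fun σ => σ.length = x)

/-- Two strings are compatible if one is an initial segment of the other. -/
def Compat (σ τ : List Bool) : Prop := σ <+: τ ∨ τ <+: σ

instance (σ τ : List Bool) : Decidable (Compat σ τ) := by
  unfold Compat; infer_instance

/-- `T_ρ` : the elements of `T` compatible with `ρ`. -/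
def Tsub (T : Finset (List Bool)) (ρ : List Bool) : Finset (List Bool) :=
  T.filter (fun σ => Compat σ ρ)

/-- `x` and `z` are consecutive elements of `X`. -/
def Consec (X : Finset ℕ) (x z : ℕ) : Prop :=
  x ∈ X ∧ z ∈ X ∧ x < z ∧ ∀ y ∈ X, y ≤ x ∨ z ≤ y

/-- `T` is `X`-quasistrong: `T` is a tree meeting every level in `X`, and every
node at a level of `X` has exactly two (necessarily incompatible) extensions at
the next level of `X`. -/
def QuasiStrong (X : Finset ℕ) (T : Finset (List Bool)) : Prop :=
  IsTree T ∧ (∀ x ∈ X, (level T x).Nonempty) ∧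
  ∀ x z, Consec X x z → ∀ σ ∈ level T x,
    ((level T z).filter (fun τ => σ <+: τ)).card = 2

/-- `σ` is a leaf (maximal element) of `S`. -/
def IsLeaf (S : Finset (List Bool)) (σ : List Bool) : Prop :=
  σ ∈ S ∧ ∀ τ ∈ S, σ <+: τ → τ = σ

/-- `S` is `(C,Y)`-prehomogeneous for color `c`. -/
def PrehomFor (C : List Bool → ℕ) (Y : Finset ℕ) (S : Finset (List Bool)) (c : ℕ) : Prop :=
  ∀ x z, Consec Y x z → ∀ σ ∈ level S x, ∀ τ ∈ level S z, σ <+: τ →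
    ∃ ζ ∈ S, σ <+: ζ ∧ ζ <+: τ ∧ C ζ = c

/-- `S` is `(C,Y)`-prehomogeneous (for some color). -/
def Prehom (C : List Bool → ℕ) (Y : Finset ℕ) (S : Finset (List Bool)) : Prop :=
  ∃ c, PrehomFor C Y S c

/-- The main clause of persistence: for every `X`-quasistrong tree `T` and every
`k`-coloring `C` of the leaves `T ∩ 2^{max X}`, there are a color `c < k` and a
`Y`-quasistrong subtree `S ⊆ T` each of whose leaves has an extension in `C⁻¹(c)`. -/
def PersClause (k : ℕ) (X Y : Finset ℕ) : Prop :=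
  ∀ T : Finset (List Bool), QuasiStrong X T →
    ∀ C : List Bool → ℕ, (∀ σ ∈ level T (fmax X), C σ < k) →
      ∃ c < k, ∃ S ⊆ T, QuasiStrong Y S ∧
        ∀ σ, IsLeaf S σ → ∃ τ ∈ level T (fmax X), σ <+: τ ∧ C τ = c

/-- `Persistent d n k i X` : `X` is `(ω^d·n, k, i)`-persistent. -/
def Persistent (d n k : ℕ) : ℕ → Finset ℕ → Prop
  | 0, X => OmegaMulLarge d n X
  | i+1, X => ∃ Y, Y ⊆ X ∧ Persistent d n k i Y ∧ PersClause k X Y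

/-- `SuperPersistent d n k i X` : `X` is `(ω^d·n, k, i)`-superpersistent. -/
def SuperPersistent (d n k i : ℕ) (X : Finset ℕ) : Prop :=
  ∀ T : List Bool → Finset (List Bool),
    (∀ ρ : List Bool, ρ.length = fmin X →
      QuasiStrong X (T ρ) ∧ ∀ σ ∈ T ρ, Compat σ ρ) →
    ∀ C : List Bool → ℕ, (∀ σ, C σ < k) →
      ∃ Y ⊆ X, Persistent d n k i Y ∧
        ∀ ρ : List Bool, ρ.length = fmin X →
          ∃ S ⊆ T ρ, QuasiStrong Y S ∧ Prehom C Y S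

/-- `eOf δ` : the least integer `e` with `2^{-e} < δ`. -/
noncomputable def eOf (δ : ℚ) : ℕ := sInf {e : ℕ | (2:ℚ) ^ (-(e:ℤ)) < δ}

/-- The Kučera–Gács coding bound `g(m,δ) = (m-1)e + m(m-1)/2`. -/
noncomputable def gKG (m : ℕ) (δ : ℚ) : ℕ := (m-1) * eOf δ + m*(m-1)/2

/-- `ḡ(x,k,i)`: iterated Kučera–Gács bound. -/
noncomputable def gbar (x k : ℕ) : ℕ → ℕ
  | 0 => x + k + 1
  | i+1 => gKG (gbar x k i) (1/(k:ℚ))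

/-- `h(ℓ,m,δ) = 2^{eℓ·2^{5m}}` where `e` is least with `2^{-e} < δ`. -/
noncomputable def hFun (l m : ℕ) (δ : ℚ) : ℕ := 2 ^ (eOf δ * l * 2 ^ (5*m))

/-- `h̄(x,n,k) = h(2^x, n, 1/k)·k^{2^x}`. -/
noncomputable def hbar (x n k : ℕ) : ℕ := hFun (2^x) n (1/(k:ℚ)) * k^(2^x)

/-- `expIter n x = exp^n(x)` where `exp(x) = 2^x`. -/
def expIter : ℕ → ℕ → ℕ
  | 0, x => x
  | n+1, x => 2 ^ (expIter n x)

/-!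
Call a leaf of `T` *missing* if it is not in `A`. If a node `σ` on a level of `X` has a fraction
`r` of missing leaves above it and `2^g` extensions `g` levels of `X` higher, the two extensions
with the fewest missing leaves have missing fraction at most `r / (1 - 2^{-g})`. So the invariant
`r < 1 - c`, where `c = ∑ 2^{-gap}` is the weight of the gaps still to be climbed, survives each
doubling step, because `(1 - c - 2^{-g}) / (1 - 2^{-g}) ≤ 1 - c`; at the last level of `Y` it
says `r < 1`, i.e. some leaf above the node lies in `A`.

A root of `T` has missing fraction at most the average `1 - δ`, so it suffices to find `Y ⊆ X`
whose gaps have weight `< δ`: writing `m = k + 2`, the gaps `e + 1, …, e + k, e + k` have weight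
exactly `2^{-e} < δ` and total length `g(m, δ) - 1`.
-/

lemma exists_ne_mul_le_sum {ι : Type*} (s : Finset ι) (f : ι → ℕ) (hs : 2 ≤ #s) :
    ∃ a ∈ s, ∃ b ∈ s, a ≠ b ∧
      (#s - 1) * f a ≤ ∑ i ∈ s, f i ∧ (#s - 1) * f b ≤ ∑ i ∈ s, f i := by
  classical
  obtain ⟨a, ha, hmin⟩ := s.exists_min_image f (card_pos.mp (by omega))
  obtain ⟨b, hb, hbmin⟩ :=
    (s.erase a).exists_min_image f (card_pos.mp (by rw [card_erase_of_mem ha]; omega))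
  have hb_le : (#s - 1) * f b ≤ ∑ i ∈ s, f i := by
    rw [← add_sum_erase s f ha, ← card_erase_of_mem ha, ← smul_eq_mul]
    exact le_add_left (card_nsmul_le_sum _ _ _ hbmin)
  exact ⟨a, ha, b, mem_of_mem_erase hb, (ne_of_mem_erase hb).symm,
    (Nat.mul_le_mul_left _ (hmin b (mem_of_mem_erase hb))).trans hb_le, hb_le⟩

section Levels

variable {X : Finset ℕ}

lemma fmin_eq_min' (h : X.Nonempty) : fmin X = X.min' h := by
  rw [fmin, ← Finset.coe_min' h]; rfl

lemma fmax_eq_max' (h : X.Nonempty) : fmax X = X.max' h := by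
  rw [fmax, ← Finset.coe_max' h]; rfl

lemma fmin_le {y : ℕ} (hy : y ∈ X) : fmin X ≤ y := by
  rw [fmin_eq_min' ⟨y, hy⟩]; exact X.min'_le y hy

lemma fmin_mem (h : X.Nonempty) : fmin X ∈ X := by
  rw [fmin_eq_min' h]; exact X.min'_mem h

lemma le_fmax {y : ℕ} (hy : y ∈ X) : y ≤ fmax X := by
  rw [fmax_eq_max' ⟨y, hy⟩]; exact X.le_max' y hy

lemma fmax_mem (h : X.Nonempty) : fmax X ∈ X := by
  rw [fmax_eq_max' h]; exact X.max'_mem h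

lemma fmin_eq_of_forall_le {a : ℕ} (ha : a ∈ X) (h : ∀ y ∈ X, a ≤ y) : fmin X = a :=
  le_antisymm (fmin_le ha) (h _ (fmin_mem ⟨a, ha⟩))

lemma fmax_eq_of_forall_le {a : ℕ} (ha : a ∈ X) (h : ∀ y ∈ X, y ≤ a) : fmax X = a :=
  le_antisymm (h _ (fmax_mem ⟨a, ha⟩)) (le_fmax ha)

lemma nth_mem_finset {i : ℕ} (hi : i < #X) : Nat.nth (· ∈ X) i ∈ X :=
  Nat.nth_mem_of_lt_card X.finite_toSet (by simpa using hi)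

lemma nth_lt_nth_finset {i j : ℕ} (hij : i < j) (hj : j < #X) :
    Nat.nth (· ∈ X) i < Nat.nth (· ∈ X) j :=
  Nat.nth_lt_nth_of_lt_card X.finite_toSet hij (by simpa using hj)

lemma nth_le_nth_finset {i j : ℕ} (hij : i ≤ j) (hj : j < #X) :
    Nat.nth (· ∈ X) i ≤ Nat.nth (· ∈ X) j :=
  Nat.nth_le_nth_of_lt_card X.finite_toSet hij (by simpa using hj)

lemma exists_nth_eq_finset {y : ℕ} (hy : y ∈ X) : ∃ i < #X, Nat.nth (· ∈ X) i = y := by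
  simpa using Nat.exists_lt_card_finite_nth_eq X.finite_toSet hy

lemma nth_zero_eq_fmin (h : 0 < #X) : Nat.nth (· ∈ X) 0 = fmin X := by
  refine (fmin_eq_of_forall_le (nth_mem_finset h) fun y hy => ?_).symm
  obtain ⟨i, hi, rfl⟩ := exists_nth_eq_finset hy
  exact nth_le_nth_finset i.zero_le hi

lemma nth_card_sub_one_eq_fmax (h : 0 < #X) : Nat.nth (· ∈ X) (#X - 1) = fmax X := by
  refine (fmax_eq_of_forall_le (nth_mem_finset (by omega)) fun y hy => ?_).symm
  obtain ⟨i, hi, rfl⟩ := exists_nth_eq_finset hy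
  exact nth_le_nth_finset (by omega) (by omega)

lemma consec_nth {p : ℕ} (h : p + 1 < #X) :
    Consec X (Nat.nth (· ∈ X) p) (Nat.nth (· ∈ X) (p + 1)) := by
  refine ⟨nth_mem_finset (by omega), nth_mem_finset h, nth_lt_nth_finset p.lt_succ_self h,
    fun y hy => ?_⟩
  obtain ⟨i, hi, rfl⟩ := exists_nth_eq_finset hy
  rcases le_or_gt i p with hip | hpi
  · exact .inl (nth_le_nth_finset hip (by omega))
  · exact .inr (nth_le_nth_finset hpi hi)

lemma Consec.of_insert {Y : Finset ℕ} {a u v : ℕ} (ha : ∀ y ∈ Y, a < y)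
    (h : Consec (insert a Y) u v) : (u = a ∧ v = fmin Y) ∨ Consec Y u v := by
  obtain ⟨hu, hv, huv, hbetween⟩ := h
  rw [mem_insert] at hu hv
  rcases hu with rfl | hu
  · have hv : v ∈ Y := hv.resolve_left huv.ne'
    have hmin := fmin_mem ⟨v, hv⟩
    exact .inl ⟨rfl, le_antisymm
      ((hbetween _ (mem_insert_of_mem hmin)).resolve_left (ha _ hmin).not_ge) (fmin_le hv)⟩
  · have hv : v ∈ Y := hv.resolve_left ((ha u hu).trans huv).ne'
    exact .inr ⟨hu, hv, huv, fun y hy => hbetween y (mem_insert_of_mem hy)⟩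

end Levels

section Trees

def extensions (B : Finset (List Bool)) (σ : List Bool) : Finset (List Bool) :=
  B.filter (σ <+: ·)

variable {T A B S : Finset (List Bool)} {σ τ ρ : List Bool}

lemma mem_extensions : τ ∈ extensions B σ ↔ τ ∈ B ∧ σ <+: τ := mem_filter

lemma mem_level {L : ℕ} : σ ∈ level T L ↔ σ ∈ T ∧ σ.length = L := mem_filter

lemma extensions_union (B' : Finset (List Bool)) :
    extensions (B ∪ B') σ = extensions B σ ∪ extensions B' σ := filter_union _ _ _

lemma level_union (S S' : Finset (List Bool)) (L : ℕ) :
    level (S ∪ S') L = level S L ∪ level S' L := filter_union _ _ _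

lemma IsTree.union {S S' : Finset (List Bool)} (h : IsTree S) (h' : IsTree S') :
    IsTree (S ∪ S') := by
  simp only [IsTree, mem_union]
  rintro σ (hσ | hσ) τ hτ
  exacts [.inl (h σ hσ τ hτ), .inr (h' σ hσ τ hτ)]

lemma Compat.symm (h : Compat σ τ) : Compat τ σ := Or.symm h

lemma Compat.prefix_of_length_le (h : Compat σ τ) (hl : σ.length ≤ τ.length) : σ <+: τ :=
  h.elim id fun h' => (h'.eq_of_length (le_antisymm h'.length_le hl)) ▸ List.prefix_refl _

lemma Compat.eq_of_prefix (h : Compat ρ τ) (hστ : σ <+: τ) (hlen : ρ.length = σ.length) :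
    ρ = σ :=
  (List.prefix_of_prefix_length_le (h.prefix_of_length_le (hlen ▸ hστ.length_le)) hστ
    hlen.le).eq_of_length hlen

lemma card_extensions_eq_sum (hT : IsTree T) {L : ℕ} (hB : ∀ υ ∈ B, υ ∈ T ∧ L ≤ υ.length)
    (hσ : σ.length ≤ L) :
    #(extensions B σ) = ∑ τ ∈ extensions (level T L) σ, #(extensions B τ) := by
  rw [card_eq_sum_card_fiberwise (f := fun υ => υ.take L)]
  · refine sum_congr rfl fun τ hτ => congrArg card (Finset.ext fun υ => ?_)
    obtain ⟨hτL, hστ⟩ := mem_extensions.mp hτ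
    rw [mem_level] at hτL
    simp only [mem_filter, mem_extensions]
    refine ⟨fun h => ⟨h.1.1, h.2 ▸ List.take_prefix _ _⟩, fun h => ⟨⟨h.1, hστ.trans h.2⟩, ?_⟩⟩
    rw [← hτL.2]
    exact (List.prefix_iff_eq_take.mp h.2).symm
  · intro υ hυ
    obtain ⟨hυB, hσυ⟩ := mem_extensions.mp hυ
    refine mem_extensions.mpr ⟨mem_level.mpr ⟨hT υ (hB υ hυB).1 _ (List.take_prefix _ _), ?_⟩,
      List.prefix_take_iff.mpr ⟨hσυ, hσ⟩⟩
    simpa using (hB υ hυB).2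

lemma extensions_nil : extensions B [] = B := filter_true_of_mem fun _ _ => List.nil_prefix

lemma mem_Tsub : ρ ∈ Tsub T σ ↔ ρ ∈ T ∧ Compat ρ σ := mem_filter

lemma Tsub_subset_Tsub_of_prefix (h : σ <+: τ) : Tsub T τ ⊆ Tsub T σ := fun ρ hρ => by
  obtain ⟨hρT, hρτ | hτρ⟩ := mem_Tsub.mp hρ
  · exact mem_Tsub.mpr ⟨hρT, List.prefix_or_prefix_of_prefix hρτ h⟩
  · exact mem_Tsub.mpr ⟨hρT, .inr (h.trans hτρ)⟩

lemma IsLeaf.mono {S' : Finset (List Bool)} (h : IsLeaf S' ρ) (hS : S ⊆ S') (hρ : ρ ∈ S) :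
    IsLeaf S ρ :=
  ⟨hρ, fun τ hτ => h.2 τ (hS hτ)⟩

lemma exists_mem_of_card_extensions_sdiff_lt
    (h : #(extensions (B \ A) σ) < #(extensions B σ)) : ∃ τ ∈ A, σ <+: τ := by
  obtain ⟨τ, hτ, hτ'⟩ := exists_mem_notMem_of_card_lt_card h
  obtain ⟨hτB, hστ⟩ := mem_extensions.mp hτ
  exact ⟨τ, by_contra fun hτA => hτ' (mem_extensions.mpr ⟨mem_sdiff.mpr ⟨hτB, hτA⟩, hστ⟩), hστ⟩

end Trees

section QuasiStrong

variable {X : Finset ℕ} {T A B : Finset (List Bool)} {σ : List Bool}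

lemma QuasiStrong.card_extensions {x z : ℕ} (hT : QuasiStrong X T) (hxz : Consec X x z)
    (hσ : σ ∈ level T x) : #(extensions (level T z) σ) = 2 :=
  hT.2.2 x z hxz σ hσ

lemma QuasiStrong.card_extensions_level_nth (hT : QuasiStrong X T) {p q : ℕ} (hpq : p ≤ q)
    (hq : q < #X) (hσ : σ ∈ level T (Nat.nth (· ∈ X) p)) :
    #(extensions (level T (Nat.nth (· ∈ X) q)) σ) = 2 ^ (q - p) := by
  induction q, hpq using Nat.le_induction with
  | base =>
    rw [Nat.sub_self, pow_zero, card_eq_one]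
    refine ⟨σ, eq_singleton_iff_unique_mem.mpr ⟨mem_extensions.mpr ⟨hσ, List.prefix_refl _⟩,
      fun τ hτ => ?_⟩⟩
    obtain ⟨hτ, hστ⟩ := mem_extensions.mp hτ
    exact (hστ.eq_of_length ((mem_level.mp hσ).2.trans (mem_level.mp hτ).2.symm)).symm
  | succ q hpq ih =>
    have hσq : σ.length ≤ Nat.nth (· ∈ X) q := by
      rw [(mem_level.mp hσ).2]; exact nth_le_nth_finset hpq (by omega)
    rw [card_extensions_eq_sum hT.1 (fun υ hυ => ?_) hσq,
      sum_congr rfl fun τ hτ => hT.card_extensions (consec_nth hq) (mem_extensions.mp hτ).1,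
      sum_const, ih (by omega), smul_eq_mul, ← pow_succ, Nat.sub_add_comm hpq]
    obtain ⟨hυT, hυ⟩ := mem_level.mp hυ
    exact ⟨hυT, hυ ▸ nth_le_nth_finset q.le_succ hq⟩

lemma QuasiStrong.exists_two_extensions (hT : QuasiStrong X T) (hB : B ⊆ level T (fmax X))
    {p q : ℕ} (hpq : p < q) (hq : q < #X) (hσ : σ ∈ level T (Nat.nth (· ∈ X) p)) :
    ∃ τ₁ ∈ extensions (level T (Nat.nth (· ∈ X) q)) σ,
    ∃ τ₂ ∈ extensions (level T (Nat.nth (· ∈ X) q)) σ, τ₁ ≠ τ₂ ∧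
      (2 ^ (q - p) - 1) * #(extensions B τ₁) ≤ #(extensions B σ) ∧
      (2 ^ (q - p) - 1) * #(extensions B τ₂) ≤ #(extensions B σ) := by
  have hcard := hT.card_extensions_level_nth hpq.le hq hσ
  have hsum : #(extensions B σ) = ∑ τ ∈ extensions (level T (Nat.nth (· ∈ X) q)) σ,
      #(extensions B τ) := by
    refine card_extensions_eq_sum hT.1 (fun υ hυ => ?_) ?_
    · obtain ⟨hυT, hυ⟩ := mem_level.mp (hB hυ)
      exact ⟨hυT, hυ ▸ le_fmax (nth_mem_finset hq)⟩
    · rw [(mem_level.mp hσ).2]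
      exact nth_le_nth_finset hpq.le hq
  rw [hsum, ← hcard]
  exact exists_ne_mul_le_sum _ _ (hcard ▸ Nat.le_self_pow (by omega) 2)

lemma QuasiStrong.exists_root_card_extensions_le (hT : QuasiStrong X T) (hX : 0 < #X)
    (hB : B ⊆ level T (fmax X)) :
    ∃ σ ∈ level T (fmin X), #(extensions B σ) * #(level T (fmax X)) ≤ #B * 2 ^ (#X - 1) := by
  have hsplit : ∀ B' ⊆ level T (fmax X),
      #B' = ∑ σ ∈ level T (fmin X), #(extensions B' σ) := fun B' hB' => by
    have := card_extensions_eq_sum (B := B') (σ := []) hT.1 (L := fmin X) (fun υ hυ => ?_)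
      (Nat.zero_le _)
    · simpa only [extensions_nil] using this
    obtain ⟨hυT, hυ⟩ := mem_level.mp (hB' hυ)
    exact ⟨hυT, hυ ▸ le_fmax (fmin_mem (card_pos.mp hX))⟩
  have htop : #(level T (fmax X)) = #(level T (fmin X)) * 2 ^ (#X - 1) := by
    rw [hsplit _ Subset.rfl, sum_const_nat fun σ hσ => ?_]
    rw [← nth_zero_eq_fmin hX] at hσ
    rw [← nth_card_sub_one_eq_fmax hX, hT.card_extensions_level_nth (Nat.zero_le _) (by omega) hσ,
      Nat.sub_zero]
  obtain ⟨σ, hσ, hmin⟩ := (level T (fmin X)).exists_min_image (fun σ => #(extensions B σ))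
    (hT.2.1 _ (fmin_mem (card_pos.mp hX)))
  refine ⟨σ, hσ, ?_⟩
  calc #(extensions B σ) * #(level T (fmax X))
      = (#(level T (fmin X)) • #(extensions B σ)) * 2 ^ (#X - 1) := by
        rw [htop, smul_eq_mul]; ring
    _ ≤ #B * 2 ^ (#X - 1) :=
        Nat.mul_le_mul_right _ (hsplit B hB ▸ card_nsmul_le_sum _ _ _ hmin)

lemma QuasiStrong.exists_root_missing_le (hT : QuasiStrong X T) (hX : 0 < #X)
    (hA : A ⊆ level T (fmax X)) {δ : ℚ} (hAc : δ * #(level T (fmax X)) ≤ #A) :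
    ∃ σ ∈ level T (fmin X),
      (#(extensions (level T (fmax X) \ A) σ) : ℚ) ≤ (1 - δ) * 2 ^ (#X - 1) := by
  obtain ⟨σ, hσ, hle⟩ := hT.exists_root_card_extensions_le hX (B := level T (fmax X) \ A)
    sdiff_subset
  refine ⟨σ, hσ, ?_⟩
  have htop : (0 : ℚ) < #(level T (fmax X)) := by
    exact_mod_cast card_pos.mpr (hT.2.1 _ (fmax_mem (card_pos.mp hX)))
  have hle' : (#(extensions (level T (fmax X) \ A) σ) : ℚ) * #(level T (fmax X)) ≤
      (#(level T (fmax X)) - #A) * 2 ^ (#X - 1) := by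
    rw [← Nat.cast_sub (card_le_card hA), ← card_sdiff_of_subset hA]
    exact_mod_cast hle
  refine le_of_mul_le_mul_right ?_ htop
  nlinarith [pow_pos (two_pos (α := ℚ)) (#X - 1)]

end QuasiStrong

section Gluing

variable {Y : Finset ℕ} {T A S S₁ S₂ : Finset (List Bool)} {σ τ τ' ρ : List Bool}

lemma quasiStrong_singleton_inits {y : ℕ} (hσ : σ.length = y) :
    QuasiStrong {y} σ.inits.toFinset := by
  refine ⟨fun ρ hρ τ hτ => ?_, fun x hx => ?_, fun u v h => ?_⟩
  · simp only [List.mem_toFinset, List.mem_inits] at hρ ⊢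
    exact hτ.trans hρ
  · rw [mem_singleton.mp hx]
    exact ⟨σ, mem_level.mpr ⟨by simp, hσ⟩⟩
  · obtain ⟨hu, hv, huv, -⟩ := h
    rw [mem_singleton] at hu hv
    omega

lemma QuasiStrong.level_fmin_eq_singleton (hS : QuasiStrong Y S) (hY : Y.Nonempty)
    (hc : ∀ ρ ∈ S, Compat ρ τ) (hτ : τ.length = fmin Y) : level S (fmin Y) = {τ} := by
  have key : ∀ ρ ∈ level S (fmin Y), ρ = τ := fun ρ hρ =>
    (hc ρ (mem_level.mp hρ).1).eq_of_prefix (List.prefix_refl τ) ((mem_level.mp hρ).2.trans hτ.symm)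
  obtain ⟨ρ, hρ⟩ := hS.2.1 _ (fmin_mem hY)
  exact eq_singleton_iff_unique_mem.mpr ⟨key ρ hρ ▸ hρ, key⟩

lemma extensions_eq_empty_of_compat_ne (hc : ∀ ζ ∈ S, Compat ζ τ) (hτ'ρ : τ' <+: ρ)
    (hlen : τ.length = τ'.length) (hne : τ ≠ τ') : extensions S ρ = ∅ := by
  refine eq_empty_of_forall_notMem fun ζ hζ => hne ?_
  obtain ⟨hζS, hρζ⟩ := mem_extensions.mp hζ
  have hτ'ζ := hτ'ρ.trans hρζ
  have hτζ : τ <+: ζ := (hc ζ hζS).symm.prefix_of_length_le (hlen ▸ hτ'ζ.length_le)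
  exact (List.prefix_of_prefix_length_le hτζ hτ'ζ hlen.le).eq_of_length hlen

lemma QuasiStrong.insert_union {a : ℕ} (hY : Y.Nonempty) (ha : ∀ y ∈ Y, a < y)
    (hS₁ : QuasiStrong Y S₁) (hS₂ : QuasiStrong Y S₂)
    (hc₁ : ∀ ρ ∈ S₁, Compat ρ τ) (hc₂ : ∀ ρ ∈ S₂, Compat ρ τ')
    (hτ : τ.length = fmin Y) (hτ' : τ'.length = fmin Y) (hne : τ ≠ τ')
    (hσ : σ.length = a) (hστ : σ <+: τ) (hστ' : σ <+: τ') :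
    QuasiStrong (insert a Y) (S₁ ∪ S₂) := by
  have hlev₁ := hS₁.level_fmin_eq_singleton hY hc₁ hτ
  have hlev₂ := hS₂.level_fmin_eq_singleton hY hc₂ hτ'
  have hτS₁ : τ ∈ S₁ := (mem_level.mp (hlev₁ ▸ mem_singleton_self τ)).1
  have hbelow : ∀ ρ ∈ level (S₁ ∪ S₂) a, ρ = σ := fun ρ hρ => by
    obtain ⟨hρS, hρ⟩ := mem_level.mp hρ
    rcases mem_union.mp hρS with hρS | hρS
    exacts [(hc₁ ρ hρS).eq_of_prefix hστ (hρ.trans hσ.symm),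
      (hc₂ ρ hρS).eq_of_prefix hστ' (hρ.trans hσ.symm)]
  refine ⟨hS₁.1.union hS₂.1, fun y hy => ?_, fun u v huv ρ hρ => ?_⟩
  · rcases mem_insert.mp hy with rfl | hy
    · exact ⟨σ, mem_level.mpr ⟨mem_union_left _ (hS₁.1 τ hτS₁ σ hστ), hσ⟩⟩
    · exact (hS₁.2.1 y hy).mono (level_union S₁ S₂ y ▸ subset_union_left)
  change #(extensions _ ρ) = 2
  rw [level_union, extensions_union]
  rcases Consec.of_insert ha huv with ⟨rfl, rfl⟩ | huv
  · obtain rfl := hbelow ρ hρ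
    rw [hlev₁, hlev₂, extensions, extensions, filter_singleton, filter_singleton,
      if_pos hστ, if_pos hστ', ← insert_eq, card_pair hne]
  have hlong : ∀ τ₀ : List Bool, τ₀.length = fmin Y → τ₀.length ≤ ρ.length := fun τ₀ h₀ => by
    rw [h₀, (mem_level.mp hρ).2]; exact fmin_le huv.1
  rcases mem_union.mp ((level_union S₁ S₂ u) ▸ hρ) with hρ | hρ
  · have hτρ := (hc₁ ρ (mem_level.mp hρ).1).symm.prefix_of_length_le (hlong τ hτ)
    rw [extensions_eq_empty_of_compat_ne (fun ζ hζ => hc₂ ζ (mem_level.mp hζ).1) hτρ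
      (hτ'.trans hτ.symm) hne.symm, union_empty]
    exact hS₁.card_extensions huv hρ
  · have hτρ := (hc₂ ρ (mem_level.mp hρ).1).symm.prefix_of_length_le (hlong τ' hτ')
    rw [extensions_eq_empty_of_compat_ne (fun ζ hζ => hc₁ ζ (mem_level.mp hζ).1) hτρ
      (hτ.trans hτ'.symm) hne, empty_union]
    exact hS₂.card_extensions huv hρ

lemma forall_isLeaf_union {P : List Bool → Prop} (h₁ : ∀ ρ, IsLeaf S₁ ρ → P ρ)
    (h₂ : ∀ ρ, IsLeaf S₂ ρ → P ρ) : ∀ ρ, IsLeaf (S₁ ∪ S₂) ρ → P ρ := fun ρ hρ =>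
  (mem_union.mp hρ.1).elim (fun h => h₁ ρ (hρ.mono subset_union_left h))
    (fun h => h₂ ρ (hρ.mono subset_union_right h))

lemma IsTree.exists_subtree_singleton (hT : IsTree T) {y : ℕ} (hσ : σ ∈ level T y)
    (hA : ∃ τ ∈ A, σ <+: τ) :
    ∃ S ⊆ Tsub T σ, QuasiStrong {y} S ∧ ∀ ρ, IsLeaf S ρ → ∃ τ ∈ A, ρ <+: τ := by
  obtain ⟨hσT, hσy⟩ := mem_level.mp hσ
  refine ⟨σ.inits.toFinset, fun ρ hρ => ?_, quasiStrong_singleton_inits hσy, fun ρ hρ => ?_⟩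
  · rw [List.mem_toFinset, List.mem_inits] at hρ
    exact mem_Tsub.mpr ⟨hT σ hσT ρ hρ, .inl hρ⟩
  · obtain rfl := hρ.2 σ (by simp) ((List.mem_inits _ _).mp (List.mem_toFinset.mp hρ.1))
    exact hA

end Gluing

section Coding

lemma cast_lt_one_sub_mul_of_two_pow_sub_one_mul_le {g r r' : ℕ} {c K : ℚ} (hg : g ≠ 0)
    (hc : 0 ≤ c) (hK : 0 ≤ K) (h : (2 ^ g - 1) * r' ≤ r)
    (hr : (r : ℚ) < (1 - (((2 : ℚ) ^ g)⁻¹ + c)) * (2 ^ g * K)) : (r' : ℚ) < (1 - c) * K := by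
  have hq : (1 : ℚ) < 2 ^ g := one_lt_pow₀ one_lt_two hg
  have h' : ((2 : ℚ) ^ g - 1) * r' ≤ r := by
    have := (Nat.cast_le (α := ℚ)).mpr h
    rwa [Nat.cast_mul, Nat.cast_sub Nat.one_le_two_pow, Nat.cast_pow, Nat.cast_ofNat,
      Nat.cast_one] at this
  have hsplit : (1 - (((2 : ℚ) ^ g)⁻¹ + c)) * (2 ^ g * K) =
      (2 ^ g - 1) * ((1 - c) * K) - c * K := by
    field_simp
    ring
  refine lt_of_mul_lt_mul_left ?_ (by linarith : (0 : ℚ) ≤ 2 ^ g - 1)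
  nlinarith [mul_nonneg hc hK]

variable {X : Finset ℕ} {T A : Finset (List Bool)} {σ : List Bool} {j : ℕ → ℕ} {l : ℕ}

lemma fmin_image_Icc_nth (hj : Monotone j) (hl : j l < #X) {t : ℕ} (ht : t ≤ l) :
    fmin ((Icc t l).image fun s => Nat.nth (· ∈ X) (j s)) = Nat.nth (· ∈ X) (j t) := by
  refine fmin_eq_of_forall_le (mem_image_of_mem _ (left_mem_Icc.mpr ht)) fun y hy => ?_
  obtain ⟨s, hs, rfl⟩ := mem_image.mp hy
  rw [mem_Icc] at hs
  exact nth_le_nth_finset (hj hs.1) ((hj hs.2).trans_lt hl)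

lemma image_Icc_nth_subset (hj : Monotone j) (hl : j l < #X) (t : ℕ) :
    (Icc t l).image (fun s => Nat.nth (· ∈ X) (j s)) ⊆ X :=
  image_subset_iff.mpr fun _ hs => nth_mem_finset ((hj (mem_Icc.mp hs).2).trans_lt hl)

lemma card_image_Icc_nth (hj : StrictMono j) (hl : j l < #X) (t : ℕ) :
    #((Icc t l).image fun s => Nat.nth (· ∈ X) (j s)) = l + 1 - t := by
  have hmono : StrictMonoOn (fun s => Nat.nth (· ∈ X) (j s)) (Icc t l) :=
    fun _ _ b hb hab => nth_lt_nth_finset (hj hab) ((hj.monotone (mem_Icc.mp hb).2).trans_lt hl)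
  rw [card_image_of_injOn hmono.injOn, Nat.card_Icc]

-- `hmiss` is the invariant `r < 1 - c`, scaled by the number `2 ^ (#X - 1 - j t)` of leaves
-- above `σ`.
theorem QuasiStrong.exists_coding_subtree (hT : QuasiStrong X T) (hj : StrictMono j)
    (hl : j l < #X) {t : ℕ} (ht : t ≤ l) (hσ : σ ∈ level T (Nat.nth (· ∈ X) (j t)))
    (hmiss : (#(extensions (level T (fmax X) \ A) σ) : ℚ) <
      (1 - ∑ s ∈ Ico t l, ((2 : ℚ) ^ (j (s + 1) - j s))⁻¹) * 2 ^ (#X - 1 - j t)) :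
    ∃ S ⊆ Tsub T σ, QuasiStrong ((Icc t l).image fun s => Nat.nth (· ∈ X) (j s)) S ∧
      ∀ ρ, IsLeaf S ρ → ∃ τ ∈ A, ρ <+: τ := by
  have hjX : ∀ s ≤ l, j s < #X := fun s hs => (hj.monotone hs).trans_lt hl
  induction ht using Nat.decreasingInduction generalizing σ with
  | self =>
    have hleaves : #(extensions (level T (fmax X)) σ) = 2 ^ (#X - 1 - j l) := by
      rw [← nth_card_sub_one_eq_fmax (by omega)]
      exact hT.card_extensions_level_nth (by omega) (by omega) hσ
    rw [Ico_self, sum_empty, sub_zero, one_mul] at hmiss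
    rw [Icc_self, image_singleton]
    exact hT.1.exists_subtree_singleton hσ
      (exists_mem_of_card_extensions_sdiff_lt (by rw [hleaves]; exact_mod_cast hmiss))
  | of_succ t ht ih =>
    have hjt := hj (Nat.lt_add_one t)
    obtain ⟨τ₁, hτ₁, τ₂, hτ₂, hne, h₁, h₂⟩ := hT.exists_two_extensions
      (B := level T (fmax X) \ A) sdiff_subset hjt (hjX _ ht) hσ
    have hpow : (2 : ℚ) ^ (#X - 1 - j t) = 2 ^ (j (t + 1) - j t) * 2 ^ (#X - 1 - j (t + 1)) := by
      rw [← pow_add]; congr 1; have := hjX (t + 1) ht; omega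
    rw [sum_eq_sum_Ico_succ_bot ht, hpow] at hmiss
    have hchild := fun τ (hτ : τ ∈ extensions (level T (Nat.nth (· ∈ X) (j (t + 1)))) σ) h =>
      ih (mem_extensions.mp hτ).1 (cast_lt_one_sub_mul_of_two_pow_sub_one_mul_le (by omega)
        (sum_nonneg fun _ _ => by positivity) (by positivity) h hmiss)
    obtain ⟨S₁, hS₁, hQ₁, hL₁⟩ := hchild τ₁ hτ₁ h₁
    obtain ⟨S₂, hS₂, hQ₂, hL₂⟩ := hchild τ₂ hτ₂ h₂
    obtain ⟨hτ₁T, hστ₁⟩ := mem_extensions.mp hτ₁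
    obtain ⟨hτ₂T, hστ₂⟩ := mem_extensions.mp hτ₂
    have hYmin := fmin_image_Icc_nth hj.monotone hl ht
    refine ⟨S₁ ∪ S₂, union_subset (hS₁.trans (Tsub_subset_Tsub_of_prefix hστ₁))
      (hS₂.trans (Tsub_subset_Tsub_of_prefix hστ₂)), ?_, forall_isLeaf_union hL₁ hL₂⟩
    rw [← insert_Icc_add_one_left_eq_Icc ht.le, image_insert]
    exact hQ₁.insert_union ⟨_, mem_image_of_mem _ (left_mem_Icc.mpr ht)⟩
      (fun y hy => (nth_lt_nth_finset hjt (hjX _ ht)).trans_le (hYmin ▸ fmin_le hy))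
      hQ₂ (fun ρ hρ => (mem_Tsub.mp (hS₁ hρ)).2) (fun ρ hρ => (mem_Tsub.mp (hS₂ hρ)).2)
      (hYmin ▸ (mem_level.mp hτ₁T).2) (hYmin ▸ (mem_level.mp hτ₂T).2) hne
      (mem_level.mp hσ).2 hστ₁ hστ₂

end Coding

section KuceraGacs

lemma inv_two_pow_eOf_lt {δ : ℚ} (hδ0 : 0 < δ) : ((2 : ℚ) ^ eOf δ)⁻¹ < δ := by
  have hne : {e : ℕ | (2 : ℚ) ^ (-(e : ℤ)) < δ}.Nonempty := by
    obtain ⟨n, hn⟩ := exists_pow_lt_of_lt_one hδ0 (by norm_num : (2 : ℚ)⁻¹ < 1)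
    exact ⟨n, by simpa [zpow_neg, inv_pow] using hn⟩
  simpa [eOf, zpow_neg] using Nat.sInf_mem hne

lemma one_le_eOf {δ : ℚ} (hδ0 : 0 < δ) (hδ1 : δ ≤ 1) : 1 ≤ eOf δ := by
  refine Nat.one_le_iff_ne_zero.mpr fun h => ?_
  have := inv_two_pow_eOf_lt hδ0
  rw [h, pow_zero, inv_one] at this
  linarith

def kgGap (e k s : ℕ) : ℕ := e + min (s + 1) k

def kgIndex (e k t : ℕ) : ℕ := ∑ s ∈ range t, kgGap e k s

lemma kgIndex_zero (e k : ℕ) : kgIndex e k 0 = 0 := sum_range_zero _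

lemma kgIndex_succ_sub (e k t : ℕ) : kgIndex e k (t + 1) - kgIndex e k t = kgGap e k t := by
  rw [kgIndex, kgIndex, sum_range_succ, add_tsub_cancel_left]

lemma strictMono_kgIndex {e : ℕ} (he : 1 ≤ e) (k : ℕ) : StrictMono (kgIndex e k) :=
  strictMono_nat_of_lt_succ fun t => by
    rw [kgIndex, kgIndex, sum_range_succ, kgGap]; omega

lemma kgIndex_add_one (e k : ℕ) :
    kgIndex e k (k + 1) + 1 = (k + 1) * e + (k + 2) * (k + 1) / 2 := by
  have hmin : ∑ s ∈ range (k + 1), min (s + 1) k = ∑ s ∈ range (k + 1), s + k := by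
    rw [sum_range_succ, min_eq_right k.le_succ, sum_range_succ', add_zero]
    congr 1
    exact sum_congr rfl fun s hs => min_eq_left (mem_range.mp hs)
  have hgauss := sum_range_id_mul_two (k + 1)
  rw [Nat.add_sub_cancel] at hgauss
  have hsq : (k + 2) * (k + 1) = (k + 1) * k + 2 * (k + 1) := by ring
  simp only [kgIndex, kgGap, sum_add_distrib, sum_const, card_range, smul_eq_mul, hmin]
  omega

lemma sum_inv_two_pow_succ_add_inv_two_pow (k : ℕ) :
    ∑ s ∈ range k, ((2 : ℚ) ^ (s + 1))⁻¹ + ((2 : ℚ) ^ k)⁻¹ = 1 := by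
  induction k with
  | zero => simp
  | succ k ih =>
    rw [sum_range_succ, ← ih, add_assoc, pow_succ]
    ring

lemma sum_inv_two_pow_kgGap (e k : ℕ) :
    ∑ s ∈ Ico 0 (k + 1), ((2 : ℚ) ^ (kgIndex e k (s + 1) - kgIndex e k s))⁻¹ =
      ((2 : ℚ) ^ e)⁻¹ := by
  simp only [← range_eq_Ico, kgIndex_succ_sub, kgGap, pow_add, mul_inv, ← mul_sum]
  rw [sum_range_succ, min_eq_right k.le_succ,
    sum_congr rfl fun s hs => by rw [min_eq_left (mem_range.mp hs)],
    sum_inv_two_pow_succ_add_inv_two_pow, mul_one]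

end KuceraGacs

/-- The Kučera–Gács coding lemma, with `g(m,δ) = (m-1)e + m(m-1)/2` where `e` is
least with `2^{-e} < δ`. -/
theorem stmt4 (m : ℕ) (δ : ℚ) (n : ℕ) (X : Finset ℕ)
    (hn : n = gKG m δ) (hmn : m ≤ n) (hm : 1 ≤ m) (hδ1 : δ ≤ 1) (hδ0 : 0 < δ)
    (hX : n ≤ X.card) :
    ∃ Y ⊆ X, Y.card = m ∧ fmin Y = fmin X ∧
      ∀ T : Finset (List Bool), QuasiStrong X T →
        ∀ A ⊆ level T (fmax X), δ * ((level T (fmax X)).card : ℚ) ≤ (A.card : ℚ) →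
          ∃ S ⊆ T, QuasiStrong Y S ∧
            ∀ σ, IsLeaf S σ → ∃ τ ∈ A, σ <+: τ := by
  have hm1 : m ≠ 1 := by rintro rfl; simp [hn, gKG] at hmn
  obtain ⟨k, rfl⟩ : ∃ k, m = k + 2 := ⟨m - 2, by omega⟩
  have hl : kgIndex (eOf δ) k (k + 1) < #X := by
    have := kgIndex_add_one (eOf δ) k
    rw [hn, gKG, show k + 2 - 1 = k + 1 from rfl] at hX
    omega
  have hj := strictMono_kgIndex (one_le_eOf hδ0 hδ1) k
  have hX0 : 0 < #X := by omega
  refine ⟨_, image_Icc_nth_subset hj.monotone hl 0, card_image_Icc_nth hj hl 0, ?_,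
    fun T hT A hA hAc => ?_⟩
  · rw [fmin_image_Icc_nth hj.monotone hl (Nat.zero_le _), kgIndex_zero, nth_zero_eq_fmin hX0]
  obtain ⟨σ, hσ, hmiss⟩ := hT.exists_root_missing_le hX0 hA hAc
  rw [← nth_zero_eq_fmin hX0, ← kgIndex_zero (eOf δ) k] at hσ
  obtain ⟨S, hST, hS, hleaf⟩ := hT.exists_coding_subtree hj hl (Nat.zero_le _) hσ (by
    rw [sum_inv_two_pow_kgGap, kgIndex_zero, Nat.sub_zero]
    exact hmiss.trans_lt (mul_lt_mul_of_pos_right (by linarith [inv_two_pow_eOf_lt hδ0])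
      (by positivity)))
  exact ⟨S, hST.trans (filter_subset _ _), hS, hleaf⟩
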